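/- Let F be a finite field with q = |F| elements and K a finite field extension of F. Let A, B ∈ K[X] be linearized polynomials with B ≠ 0. Then there exist unique linearized polynomials Q, R ∈ K[X] such that A = Q ∘ B + R and deg R < deg B. -/

import Mathlib

open Polynomial

/-- A polynomial over `K` is linearized (a `q`-polynomial) if every exponent in
its support is a power of `q`. -/
def IsLinearized (q : ℕ) {K : Type*} [Semiring K] (p : K[X]) : Prop :=
  ∀ n ∈ p.support, ∃ i : ℕ, n = q ^ i

section Helpers

variable {K : Type*} [Field K] {q : ℕ}

lemma IsLinearized.zero : IsLinearized q (0 : K[X]) := by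
  intro n hn; simp at hn

lemma IsLinearized.add {p r : K[X]} (hp : IsLinearized q p) (hr : IsLinearized q r) :
    IsLinearized q (p + r) := by
  intro n hn
  rcases Finset.mem_union.mp (Polynomial.support_add hn) with h | h
  exacts [hp n h, hr n h]

lemma IsLinearized.neg {p : K[X]} (hp : IsLinearized q p) : IsLinearized q (-p) := by
  intro n hn; exact hp n (by rwa [Polynomial.support_neg] at hn)

lemma IsLinearized.sub {p r : K[X]} (hp : IsLinearized q p) (hr : IsLinearized q r) :
    IsLinearized q (p - r) := by
  rw [sub_eq_add_neg]; exact hp.add hr.neg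

lemma IsLinearized.C_mul (c : K) {p : K[X]} (hp : IsLinearized q p) :
    IsLinearized q (C c * p) := by
  intro n hn
  rw [← Polynomial.smul_eq_C_mul] at hn
  exact hp n (Polynomial.support_smul c p hn)

lemma IsLinearized.sum {α : Type*} (s : Finset α) (f : α → K[X])
    (hf : ∀ a ∈ s, IsLinearized q (f a)) : IsLinearized q (∑ a ∈ s, f a) := by
  classical
  induction s using Finset.induction_on with
  | empty => simpa using IsLinearized.zero
  | insert _ _ h ih =>
    rw [Finset.sum_insert h]
    exact (hf _ (Finset.mem_insert_self _ _)).add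
      (ih fun a ha => hf a (Finset.mem_insert_of_mem ha))

lemma IsLinearized.pow_q {p e : ℕ} [ExpChar K p] (hq : q = p ^ e) {f : K[X]}
    (hf : IsLinearized q f) : IsLinearized q (f ^ q) := by
  intro n hn
  rw [hq, ← Polynomial.map_iterateFrobenius_expand] at hn
  have hn' := Polynomial.support_map_subset _ _ hn
  rw [Polynomial.mem_support_iff,
    Polynomial.coeff_expand (pow_pos (expChar_pos K p) e)] at hn'
  rw [← hq] at hn'
  split_ifs at hn' with hdvd
  · obtain ⟨i, hi⟩ := hf (n / q) (Polynomial.mem_support_iff.mpr hn')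
    exact ⟨i + 1, by rw [← Nat.div_mul_cancel hdvd, hi, pow_succ]⟩
  · exact absurd rfl hn'

lemma IsLinearized.pow_q_pow {p e : ℕ} [ExpChar K p] (hq : q = p ^ e) {f : K[X]}
    (hf : IsLinearized q f) (i : ℕ) : IsLinearized q (f ^ q ^ i) := by
  induction i with
  | zero => simpa using hf
  | succ i ih =>
    rw [pow_succ, pow_mul]
    exact ih.pow_q hq

lemma IsLinearized.comp {p e : ℕ} [ExpChar K p] (hq : q = p ^ e) {P B : K[X]}
    (hP : IsLinearized q P) (hB : IsLinearized q B) : IsLinearized q (P.comp B) := by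
  rw [Polynomial.comp_eq_sum_left, Polynomial.sum]
  refine IsLinearized.sum _ _ fun n hn => ?_
  obtain ⟨i, rfl⟩ := hP n hn
  exact (hB.pow_q_pow hq i).C_mul _

/-- Existence part of right division for linearized polynomials. -/
lemma lin_div_exists {p e : ℕ} [ExpChar K p] (hq : q = p ^ e) (hq1 : 1 < q)
    (B : K[X]) (hB : IsLinearized q B) (hB0 : B ≠ 0) :
    ∀ A : K[X], IsLinearized q A →
      ∃ Q R : K[X], IsLinearized q Q ∧ IsLinearized q R ∧ A = Q.comp B + R ∧
        R.degree < B.degree := by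
  suffices H : ∀ n : ℕ, ∀ A : K[X], A.natDegree < n → IsLinearized q A →
      ∃ Q R : K[X], IsLinearized q Q ∧ IsLinearized q R ∧ A = Q.comp B + R ∧
        R.degree < B.degree by
    exact fun A hA => H (A.natDegree + 1) A (Nat.lt_succ_self _) hA
  intro n
  induction n with
  | zero => intro A h; omega
  | succ n ih =>
    intro A hAn hA
    by_cases hlt : A.degree < B.degree
    · exact ⟨0, A, IsLinearized.zero, hA, by simp, hlt⟩
    · have hBA : B.degree ≤ A.degree := le_of_not_gt hlt
      have hA0 : A ≠ 0 := by
        rintro rfl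
        rw [degree_zero] at hBA
        exact hB0 (degree_eq_bot.mp (le_bot_iff.mp hBA))
      obtain ⟨a, ha⟩ := hA A.natDegree (natDegree_mem_support_of_nonzero hA0)
      obtain ⟨b, hb⟩ := hB B.natDegree (natDegree_mem_support_of_nonzero hB0)
      have hnat : B.natDegree ≤ A.natDegree := natDegree_le_natDegree hBA
      have hba : b ≤ a := by
        rw [ha, hb] at hnat
        exact (Nat.pow_le_pow_iff_right hq1).mp hnat
      set k : ℕ := q ^ (a - b) with hk
      have hBlc : B.leadingCoeff ≠ 0 := leadingCoeff_ne_zero.mpr hB0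
      set c : K := A.leadingCoeff / B.leadingCoeff ^ k with hc
      have hc0 : c ≠ 0 :=
        div_ne_zero (leadingCoeff_ne_zero.mpr hA0) (pow_ne_zero _ hBlc)
      set T : K[X] := C c * X ^ k with hT
      have hTlin : IsLinearized q T := by
        intro m hm
        have := Polynomial.support_C_mul_X_pow' k c hm
        rw [Finset.mem_singleton] at this
        exact ⟨a - b, this⟩
      have hTcomp : T.comp B = C c * B ^ k := by
        simp [hT, mul_comp, C_comp, X_pow_comp]
      have hTBlin : IsLinearized q (T.comp B) := by
        rw [hTcomp]; exact (hB.pow_q_pow hq (a - b)).C_mul _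
      have hTB0 : T.comp B ≠ 0 := by
        rw [hTcomp]
        exact mul_ne_zero (by simpa using hc0) (pow_ne_zero _ hB0)
      have hTBnat : (T.comp B).natDegree = A.natDegree := by
        rw [hTcomp, natDegree_C_mul hc0, natDegree_pow, hb, hk, ← pow_add,
          Nat.sub_add_cancel hba, ha]
      have hTBdeg : A.degree = (T.comp B).degree := by
        rw [degree_eq_natDegree hA0, degree_eq_natDegree hTB0, hTBnat]
      have hTBlc : A.leadingCoeff = (T.comp B).leadingCoeff := by
        rw [hTcomp, leadingCoeff_mul, leadingCoeff_C, leadingCoeff_pow, hc,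
          div_mul_cancel₀ _ (pow_ne_zero _ hBlc)]
      set A' : K[X] := A - T.comp B with hA'
      have hA'lin : IsLinearized q A' := hA.sub hTBlin
      have hA'deg : A'.degree < A.degree := degree_sub_lt hTBdeg hA0 hTBlc
      have hAnat : 0 < A.natDegree := by
        rw [ha]
        calc 0 < q ^ b := pow_pos (by omega) b
        _ ≤ q ^ a := Nat.pow_le_pow_right (by omega) hba
      have hA'n : A'.natDegree < n := by
        rcases eq_or_ne A' 0 with h0 | h0
        · rw [h0, natDegree_zero]; omega
        · have := natDegree_lt_natDegree h0 hA'deg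
          omega
      obtain ⟨Q', R', hQ'lin, hR'lin, hQR', hR'deg⟩ :=
        ih A' hA'n hA'lin
      refine ⟨Q' + T, R', hQ'lin.add hTlin, hR'lin, ?_, hR'deg⟩
      rw [add_comp]
      have : A = A' + T.comp B := by rw [hA']; ring
      rw [this, hQR']; ring

end Helpers

/-- Right euclidean division of linearized polynomials: for linearized `A`, `B`
with `B ≠ 0` there exist unique linearized `Q`, `R` with `A = Q ∘ B + R` and
`deg R < deg B`. -/
theorem linearized_right_division (F K : Type*) [Field F] [Fintype F]
    [Field K] [Fintype K] [Algebra F K]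
    (q : ℕ) (hq : q = Fintype.card F)
    (A B : K[X]) (hA : IsLinearized q A) (hB : IsLinearized q B) (hB0 : B ≠ 0) :
    ∃! QR : K[X] × K[X],
      IsLinearized q QR.1 ∧ IsLinearized q QR.2 ∧
        A = QR.1.comp B + QR.2 ∧ QR.2.degree < B.degree := by
  -- Set up the characteristic.
  set p : ℕ := ringChar F with hp
  haveI : CharP F p := ringChar.charP F
  obtain ⟨e, hpe, hcard⟩ := FiniteField.card F p
  haveI : Fact p.Prime := ⟨hpe⟩
  haveI : CharP K p := charP_of_injective_algebraMap (algebraMap F K).injective p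
  haveI : ExpChar K p := ExpChar.prime hpe
  have hqe : q = p ^ (e : ℕ) := by rw [hq, hcard]
  have hq1 : 1 < q := by rw [hq]; exact Fintype.one_lt_card
  obtain ⟨Q, R, hQlin, hRlin, hQR, hRdeg⟩ := lin_div_exists hqe hq1 B hB hB0 A hA
  refine ⟨(Q, R), ⟨hQlin, hRlin, hQR, hRdeg⟩, ?_⟩
  rintro ⟨Q', R'⟩ ⟨hQ'lin, hR'lin, hQR', hR'deg⟩
  -- uniqueness
  have key : ∀ Q₁ R₁ Q₂ R₂ : K[X], IsLinearized q Q₁ → IsLinearized q Q₂ →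
      A = Q₁.comp B + R₁ → A = Q₂.comp B + R₂ →
      R₁.degree < B.degree → R₂.degree < B.degree → Q₁ = Q₂ := by
    intro Q₁ R₁ Q₂ R₂ hQ₁ hQ₂ h₁ h₂ hd₁ hd₂
    by_contra hne
    have hD0 : Q₁ - Q₂ ≠ 0 := sub_ne_zero.mpr hne
    have hDlin : IsLinearized q (Q₁ - Q₂) := hQ₁.sub hQ₂
    obtain ⟨d, hd⟩ := hDlin _ (natDegree_mem_support_of_nonzero hD0)
    obtain ⟨b, hb⟩ := hB B.natDegree (natDegree_mem_support_of_nonzero hB0)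
    have hcompeq : (Q₁ - Q₂).comp B = R₂ - R₁ := by
      rw [sub_comp]
      have := h₁.symm.trans h₂
      linear_combination this
    have hnatcomp : ((Q₁ - Q₂).comp B).natDegree =
        (Q₁ - Q₂).natDegree * B.natDegree := natDegree_comp
    have hpos : 0 < (Q₁ - Q₂).natDegree := by
      rw [hd]; exact pow_pos (by omega) d
    have hcomp0 : (Q₁ - Q₂).comp B ≠ 0 := by
      intro h
      rw [h, natDegree_zero] at hnatcomp
      have hbpos : 0 < B.natDegree := by rw [hb]; exact pow_pos (by omega) b
      exact absurd hnatcomp.symm (Nat.mul_ne_zero (by omega) (by omega))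
    have hge : B.degree ≤ ((Q₁ - Q₂).comp B).degree := by
      rw [degree_eq_natDegree hB0, degree_eq_natDegree hcomp0, hnatcomp]
      exact_mod_cast Nat.le_mul_of_pos_left _ hpos
    have hlt : ((Q₁ - Q₂).comp B).degree < B.degree := by
      rw [hcompeq]
      exact lt_of_le_of_lt (degree_sub_le _ _) (max_lt hd₂ hd₁)
    exact absurd hge (not_le.mpr hlt)
  have hQQ : Q' = Q := key Q' R' Q R hQ'lin hQlin hQR' hQR hR'deg hRdeg
  have hRR : R' = R := by
    have h := hQR'.symm.trans hQR
    rw [hQQ] at h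
    exact add_left_cancel h
  simp [hQQ, hRR]
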